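/- The total swap change decomposes: for a swap replacing medoid m_i by non-medoid x_j, the summed change n·ΔS̃ over all points equals ΔS̃^{−m_i} + ΔS̃^{+x_j} plus correction terms that vanish for every point whose nearest and second nearest medoids are both different from m_i; i.e., for any point o with n_1(o) ≠ i and n_2(o) ≠ i, the contribution of o to n·ΔS̃ equals its contribution to ΔS̃^{+x_j}. -/

import Mathlib

/-!
Write `d₀ ≤ d₁ ≤ …` for the sorted distances from `o` to the medoids. Since `d(o, m) > d₁`,
removing `m` leaves `d₀, d₁` at the front of the sorted list, and adding `j` inserts `d(o, j)`
into it, so the two smallest distances after the swap are `min (d(o, j)) d₀` and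
`max d₀ (min (d(o, j)) d₁)`. The change of the Medoid Silhouette of `o` is then a three-case
computation according to where `d(o, j)` falls relative to `d₀` and `d₁`.
-/

/-- distance from `x` to its `(n+1)`-th nearest medoid in `M` (0-indexed). -/
noncomputable def nthDist {X : Type*} (d : X → X → ℝ) (M : Finset X) (x : X) (n : ℕ) : ℝ :=
  ((M.val.map (d x)).sort (· ≤ ·)).getD n 0

/-- Medoid Silhouette of a single point. -/
noncomputable def msil {X : Type*} (d : X → X → ℝ) (M : Finset X) (x : X) : ℝ :=
  if nthDist d M x 0 = 0 ∧ nthDist d M x 1 = 0 then 1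
  else 1 - nthDist d M x 0 / nthDist d M x 1

/-- Average Medoid Silhouette. -/
noncomputable def AMS {X : Type*} [Fintype X] (d : X → X → ℝ) (M : Finset X) : ℝ :=
  (∑ x : X, msil d M x) / (Fintype.card X)

/-- `x ∼_M y`: x and y share a nearest medoid in `M`. -/
def simM {X : Type*} (d : X → X → ℝ) (M : Finset X) (x y : X) : Prop :=
  ∃ m ∈ M, d x m = nthDist d M x 0 ∧ d y m = nthDist d M y 0

namespace Multiset

variable {α : Type*} [LinearOrder α]

theorem sort_cons_eq_orderedInsert (a : α) (s : Multiset α) :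
    (a ::ₘ s).sort (· ≤ ·) = (s.sort (· ≤ ·)).orderedInsert (· ≤ ·) a := by
  refine List.Perm.eq_of_pairwise' (pairwise_sort _ _) ((pairwise_sort _ _).orderedInsert _ _) ?_
  rw [← coe_eq_coe, sort_eq, coe_eq_coe.mpr (List.perm_orderedInsert _ _ _), ← cons_coe, sort_eq]

theorem sort_erase (s : Multiset α) (x : α) :
    (s.erase x).sort (· ≤ ·) = (s.sort (· ≤ ·)).erase x := by
  refine List.Perm.eq_of_pairwise' (pairwise_sort _ _)
    ((pairwise_sort _ _).sublist List.erase_sublist) ?_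
  rw [← coe_eq_coe, sort_eq, ← coe_erase, sort_eq]

theorem exists_sort_eq_cons_cons {s : Multiset α} (hs : 2 ≤ card s) :
    ∃ a b l, s.sort (· ≤ ·) = a :: b :: l ∧ a ≤ b := by
  have hsorted := pairwise_sort s (· ≤ ·)
  rw [← length_sort (· ≤ ·)] at hs
  match s.sort (· ≤ ·), hs, hsorted with
  | a :: b :: l, _, hp => exact ⟨a, b, l, rfl, List.rel_of_pairwise_cons hp (by simp)⟩

end Multiset

theorem List.exists_orderedInsert_cons_cons_eq {α : Type*} [LinearOrder α] (x a b : α)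
    (l : List α) (hab : a ≤ b) :
    ∃ l', (a :: b :: l).orderedInsert (· ≤ ·) x = min x a :: max a (min x b) :: l' := by
  simp only [List.orderedInsert]
  split_ifs with hxa hxb
  · exact ⟨b :: l, by simp [hxa, hxa.trans hab]⟩
  · exact ⟨b :: l, by simp [(not_le.mp hxa).le, hxb]⟩
  · exact ⟨l.orderedInsert (· ≤ ·) x, by simp [(not_le.mp hxa).le, (not_le.mp hxb).le, hab]⟩

theorem Finset.sort_map_insert_erase {X α : Type*} [DecidableEq X] [LinearOrder α] (f : X → α)
    {s : Finset X} {m j : X} (hm : m ∈ s) (hj : j ∉ s) :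
    ((insert j (s.erase m)).val.map f).sort (· ≤ ·)
      = (((s.val.map f).sort (· ≤ ·)).erase (f m)).orderedInsert (· ≤ ·) (f j) := by
  rw [insert_val_of_notMem (mt mem_of_mem_erase hj), Multiset.map_cons, erase_val,
    Multiset.map_erase_of_mem _ _ hm, Multiset.sort_cons_eq_orderedInsert, Multiset.sort_erase]

theorem one_sub_min_div_sub_one_sub_div_eq_ite {a b x : ℝ} (hab : a ≤ b) :
    (1 - min x a / max a (min x b)) - (1 - a / b)
      = if x < a then a / b - x / a else if x < b then a / b - a / x else 0 := by
  split_ifs with hxa hxb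
  · rw [min_eq_left hxa.le, min_eq_left (hxa.trans_le hab).le, max_eq_left hxa.le]; ring
  · rw [min_eq_right (not_lt.mp hxa), min_eq_left hxb.le, max_eq_right (not_lt.mp hxa)]; ring
  · rw [min_eq_right (not_lt.mp hxa), min_eq_right (not_lt.mp hxb), max_eq_right hab]; ring

section MedoidSilhouette

variable {X : Type*} (d : X → X → ℝ) {M : Finset X} {o : X}

theorem nthDist_eq_of_sort_eq_cons_cons {a b : ℝ} {l : List ℝ}
    (h : (M.val.map (d o)).sort (· ≤ ·) = a :: b :: l) :
    nthDist d M o 0 = a ∧ nthDist d M o 1 = b := by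
  simp [nthDist, h]

theorem nthDist_zero_le_one (hM : 2 ≤ M.card) : nthDist d M o 0 ≤ nthDist d M o 1 := by
  obtain ⟨a, b, l, hl, hab⟩ := Multiset.exists_sort_eq_cons_cons (s := M.val.map (d o))
    (by rwa [Multiset.card_map])
  obtain ⟨ha, hb⟩ := nthDist_eq_of_sort_eq_cons_cons d hl
  rwa [ha, hb]

theorem msil_eq_one_sub_div (h : nthDist d M o 0 ≠ 0) :
    msil d M o = 1 - nthDist d M o 0 / nthDist d M o 1 :=
  if_neg fun h' => h h'.1

theorem nthDist_swap_of_lt [DecidableEq X] {m j : X} (hM : 2 ≤ M.card) (hm : m ∈ M)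
    (hj : j ∉ M) (hfar : nthDist d M o 1 < d o m) :
    nthDist d (insert j (M.erase m)) o 0 = min (d o j) (nthDist d M o 0) ∧
      nthDist d (insert j (M.erase m)) o 1
        = max (nthDist d M o 0) (min (d o j) (nthDist d M o 1)) := by
  obtain ⟨a, b, l, hl, hab⟩ := Multiset.exists_sort_eq_cons_cons (s := M.val.map (d o))
    (by rwa [Multiset.card_map])
  obtain ⟨ha, hb⟩ := nthDist_eq_of_sort_eq_cons_cons d hl
  rw [hb] at hfar
  rw [ha, hb]
  have herase : (a :: b :: l).erase (d o m) = a :: b :: l.erase (d o m) := by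
    simp [(hab.trans_lt hfar).ne, hfar.ne]
  obtain ⟨l', hl'⟩ := List.exists_orderedInsert_cons_cons_eq (d o j) a b (l.erase (d o m)) hab
  rw [← herase, ← hl, ← Finset.sort_map_insert_erase _ hm hj] at hl'
  exact nthDist_eq_of_sort_eq_cons_cons d hl'

end MedoidSilhouette

theorem swap_change_decomposition_general {X : Type*} [DecidableEq X] (d : X → X → ℝ) (M : Finset X)
    (hk : 3 ≤ M.card) (o m j : X) (hm : m ∈ M) (hj : j ∉ M)
    (hpos : 0 < nthDist d M o 0) (hposj : 0 < d o j)
    (hfar : nthDist d M o 1 < d o m) :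
    msil d (insert j (M.erase m)) o - msil d M o
      = if d o j < nthDist d M o 0 then
          nthDist d M o 0 / nthDist d M o 1 - d o j / nthDist d M o 0
        else if d o j < nthDist d M o 1 then
          nthDist d M o 0 / nthDist d M o 1 - nthDist d M o 0 / d o j
        else 0 := by
  have hM : 2 ≤ M.card := by omega
  obtain ⟨h0, h1⟩ := nthDist_swap_of_lt d hM hm hj hfar
  have hpos_swap : nthDist d (insert j (M.erase m)) o 0 ≠ 0 := by
    rw [h0]; exact (lt_min hposj hpos).ne'
  rw [msil_eq_one_sub_div d hpos_swap, msil_eq_one_sub_div d hpos.ne', h0, h1]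
  exact one_sub_min_div_sub_one_sub_div_eq_ite (nthDist_zero_le_one d hM)

/-- decomposition of the total swap change: for any point o whose nearest
and second nearest medoids both differ from the removed medoid m, the contribution of o
to n·ΔS̃ equals its contribution to ΔS̃^{+x_j}. -/
theorem swap_change_decomposition {X : Type*} [Fintype X] [DecidableEq X] (d : X → X → ℝ) (M : Finset X)
    (hk : 3 ≤ M.card) (o m j : X) (hm : m ∈ M) (hj : j ∉ M)
    (hinj : Set.InjOn (d o) ↑M)
    (hpos : 0 < nthDist d M o 0) (hposj : 0 < d o j)
    (hfar : nthDist d M o 1 < d o m) :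
    msil d (insert j (M.erase m)) o - msil d M o
      = if d o j < nthDist d M o 0 then
          nthDist d M o 0 / nthDist d M o 1 - d o j / nthDist d M o 0
        else if d o j < nthDist d M o 1 then
          nthDist d M o 0 / nthDist d M o 1 - nthDist d M o 0 / d o j
        else 0 :=
  swap_change_decomposition_general d M hk o m j hm hj hpos hposj hfar
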